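/- Let H be a complex Hilbert space and A a bounded self-adjoint operator on H whose spectrum is contained in [λ₀, ∞) for some λ₀ > 0. Then for every β ∈ ℝ and every x ∈ H, ∫₀^∞ ‖A^β e^{-tA} x‖² dt = (1/2) ‖A^{β − 1/2} x‖². -/

import Mathlib

/-!
By the continuous functional calculus, `‖A^β e^{-tA} x‖² = re ⟪x, A^{2β} e^{-2tA} x⟫`.
The Bochner integral over `t` commutes with the functional calculus, because on the spectrum,
which lies in `[λ₀, ∞)`, the integrand is dominated by `M e^{-2λ₀ t}`. Pointwise
`∫₀^∞ s^{2β} e^{-2ts} dt = s^{2β-1} / 2`, which leaves `re ⟪x, A^{2β-1} x⟫ / 2 = ‖A^{β-1/2} x‖² / 2`.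
-/

open MeasureTheory

/-- Fractional power `A^s` of a (positive self-adjoint) bounded operator, via the
continuous functional calculus. -/
noncomputable def fracPow {H : Type*} [NormedAddCommGroup H] [InnerProductSpace ℂ H]
    [CompleteSpace H] (A : H →L[ℂ] H) (s : ℝ) : H →L[ℂ] H :=
  cfc (fun x : ℝ => x ^ s) A

open Set

lemma IsSelfAdjoint.exp_smul_eq_cfc {𝒜 : Type*} [NormedRing 𝒜] [StarRing 𝒜]
    [NormedAlgebra ℝ 𝒜] [StarModule ℝ 𝒜] [ContinuousFunctionalCalculus ℝ 𝒜 IsSelfAdjoint]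
    {a : 𝒜} (ha : IsSelfAdjoint a) (r : ℝ) :
    NormedSpace.exp (r • a) = cfc (fun s => Real.exp (r * s)) a := by
  rw [← CFC.real_exp_eq_normedSpace_exp ((IsSelfAdjoint.all r).smul ha),
    ← cfc_comp_smul r Real.exp a]
  rfl

lemma exists_norm_mul_exp_neg_le {K : Set ℝ} (hK : IsCompact K) {lam : ℝ}
    (hK_ge : ∀ s ∈ K, lam ≤ s) {g : ℝ → ℝ} (hg : ContinuousOn g K) :
    ∃ M, ∀ t, 0 ≤ t → ∀ s ∈ K, ‖g s * Real.exp (-s * t)‖ ≤ M * Real.exp (-lam * t) := by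
  obtain ⟨M, hM⟩ := hK.exists_bound_of_continuousOn hg
  refine ⟨M, fun t ht s hs => ?_⟩
  rw [norm_mul, Real.norm_of_nonneg (Real.exp_pos _).le]
  gcongr
  · exact (norm_nonneg _).trans (hM s hs)
  · exact hM s hs
  · nlinarith [hK_ge s hs]

section LaplaceTransform

variable {𝒜 : Type*} [CStarAlgebra 𝒜] {a : 𝒜} {lam : ℝ} {g : ℝ → ℝ}

lemma continuousOn_uncurry_mul_exp_neg (hg : ContinuousOn g (spectrum ℝ a)) :
    ContinuousOn (Function.uncurry fun t s => g s * Real.exp (-s * t))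
      (Ioi 0 ×ˢ spectrum ℝ a) :=
  (hg.comp continuousOn_snd fun _ hp => hp.2).mul (by fun_prop)

theorem integrableOn_cfc_mul_exp_neg (ha : IsSelfAdjoint a) (hlam : 0 < lam)
    (hspec : ∀ s ∈ spectrum ℝ a, lam ≤ s) (hg : ContinuousOn g (spectrum ℝ a)) :
    IntegrableOn (fun t => cfc (fun s => g s * Real.exp (-s * t)) a) (Ioi 0) := by
  obtain ⟨M, hM⟩ := exists_norm_mul_exp_neg_le (spectrum.isCompact a) hspec hg
  exact integrableOn_cfc measurableSet_Ioi _ (fun t => M * Real.exp (-lam * t)) a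
    (continuousOn_uncurry_mul_exp_neg hg)
    (ae_restrict_of_forall_mem measurableSet_Ioi fun t ht => hM t (le_of_lt ht))
    ((exp_neg_integrableOn_Ioi 0 hlam).const_mul M).hasFiniteIntegral ha

theorem setIntegral_cfc_mul_exp_neg (ha : IsSelfAdjoint a) (hlam : 0 < lam)
    (hspec : ∀ s ∈ spectrum ℝ a, lam ≤ s) (hg : ContinuousOn g (spectrum ℝ a)) :
    ∫ t in Ioi 0, cfc (fun s => g s * Real.exp (-s * t)) a = cfc (fun s => g s / s) a := by
  obtain ⟨M, hM⟩ := exists_norm_mul_exp_neg_le (spectrum.isCompact a) hspec hg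
  rw [← cfc_setIntegral measurableSet_Ioi _ (fun t => M * Real.exp (-lam * t)) a
    (continuousOn_uncurry_mul_exp_neg hg)
    (ae_restrict_of_forall_mem measurableSet_Ioi fun t ht => hM t (le_of_lt ht))
    ((exp_neg_integrableOn_Ioi 0 hlam).const_mul M).hasFiniteIntegral ha]
  refine cfc_congr fun s hs => ?_
  rw [integral_const_mul, integral_exp_mul_Ioi (neg_neg_of_pos (hlam.trans_le (hspec s hs))) 0]
  simp [div_eq_mul_inv]

end LaplaceTransform

section Operators

variable {H : Type*} [NormedAddCommGroup H] [InnerProductSpace ℂ H] [CompleteSpace H]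

lemma integral_re_inner_apply {X : Type*} [MeasurableSpace X] {μ : Measure X}
    {T : X → H →L[ℂ] H} (hT : Integrable T μ) (x y : H) :
    ∫ t, RCLike.re (inner ℂ x (T t y)) ∂μ = RCLike.re (inner ℂ x ((∫ t, T t ∂μ) y)) := by
  rw [ContinuousLinearMap.integral_apply hT, ← integral_inner (hT.apply_continuousLinearMap y),
    integral_re ((hT.apply_continuousLinearMap y).const_inner x)]

variable {A : H →L[ℂ] H}

lemma norm_cfc_apply_sq (hA : IsSelfAdjoint A) {f : ℝ → ℝ}
    (hf : ContinuousOn f (spectrum ℝ A)) (x : H) :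
    ‖cfc f A x‖ ^ 2 = RCLike.re (inner ℂ x (cfc (fun s => f s ^ 2) A x)) := by
  rw [cfc_pow f 2 A, sq (cfc f A), mul_apply_eq_comp, ← ContinuousLinearMap.adjoint_inner_left,
    (cfc_predicate f A : IsSelfAdjoint (cfc f A)).adjoint_eq, inner_self_eq_norm_sq]

lemma norm_fracPow_exp_apply_sq (hA : IsSelfAdjoint A) (hpos : ∀ s ∈ spectrum ℝ A, 0 < s)
    (β t : ℝ) (x : H) :
    ‖fracPow A β (NormedSpace.exp ((-t) • A) x)‖ ^ 2 =
      RCLike.re (inner ℂ x (cfc (fun s => s ^ (2 * β) * Real.exp (-s * (2 * t))) A x)) := by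
  have hrpow : ContinuousOn (fun s : ℝ => s ^ β) (spectrum ℝ A) :=
    continuousOn_id.rpow_const fun s hs => Or.inl (hpos s hs).ne'
  have hsq : EqOn (fun s => (s ^ β * Real.exp (-t * s)) ^ 2)
      (fun s => s ^ (2 * β) * Real.exp (-s * (2 * t))) (spectrum ℝ A) := fun s hs => by
    dsimp only
    rw [mul_pow, ← Real.rpow_mul_natCast (hpos s hs).le, ← Real.exp_nat_mul]
    ring_nf
  rw [hA.exp_smul_eq_cfc, fracPow, ← mul_apply_eq_comp,
    ← cfc_mul (fun s => s ^ β) (fun s => Real.exp (-t * s)) A,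
    norm_cfc_apply_sq hA (f := fun s => s ^ β * Real.exp (-t * s)) (hrpow.mul (by fun_prop)),
    cfc_congr hsq]

end Operators

/-- For `A` self-adjoint with spectrum in `[λ₀, ∞)`, `λ₀ > 0`,
every `β ∈ ℝ` and `x ∈ H`: `∫₀^∞ ‖A^β e^{-tA} x‖² dt = (1/2)‖A^{β-1/2} x‖²`. -/
theorem stmt14
    {H : Type*} [NormedAddCommGroup H] [InnerProductSpace ℂ H] [CompleteSpace H]
    (A : H →L[ℂ] H) (hA : IsSelfAdjoint A)
    (lam : ℝ) (hlam : 0 < lam) (hspec : ∀ z ∈ spectrum ℂ A, lam ≤ z.re)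
    (β : ℝ) (x : H) :
    (∫ t in Set.Ioi (0:ℝ), ‖fracPow A β ((NormedSpace.exp ((-t) • A)) x)‖ ^ 2) =
      1 / 2 * ‖fracPow A (β - 1/2) x‖ ^ 2 := by
  have hspecR : ∀ s ∈ spectrum ℝ A, lam ≤ s := fun s hs => by
    simpa using hspec _ (spectrum.algebraMap_mem ℂ hs)
  have hpos : ∀ s ∈ spectrum ℝ A, 0 < s := fun s hs => hlam.trans_le (hspecR s hs)
  have hrpow (γ : ℝ) : ContinuousOn (fun s : ℝ => s ^ γ) (spectrum ℝ A) :=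
    continuousOn_id.rpow_const fun s hs => Or.inl (hpos s hs).ne'
  let φ (u : ℝ) : ℝ :=
    RCLike.re (inner ℂ x (cfc (fun s => s ^ (2 * β) * Real.exp (-s * u)) A x))
  calc ∫ t in Ioi (0 : ℝ), ‖fracPow A β (NormedSpace.exp ((-t) • A) x)‖ ^ 2
      = ∫ t in Ioi 0, φ (2 * t) := by simp_rw [norm_fracPow_exp_apply_sq hA hpos]; rfl
    _ = 2⁻¹ * ∫ t in Ioi 0, φ t := by
      rw [integral_comp_mul_left_Ioi φ 0 two_pos, mul_zero, smul_eq_mul]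
    _ = 2⁻¹ * RCLike.re (inner ℂ x (cfc (fun s => s ^ (2 * β) / s) A x)) := by
      rw [integral_re_inner_apply (integrableOn_cfc_mul_exp_neg hA hlam hspecR (hrpow _)),
        setIntegral_cfc_mul_exp_neg hA hlam hspecR (hrpow _)]
    _ = 1 / 2 * ‖fracPow A (β - 1 / 2) x‖ ^ 2 := by
      have hsq : EqOn (fun s => s ^ (2 * β) / s) (fun s => (s ^ (β - 1 / 2)) ^ 2)
          (spectrum ℝ A) := fun s hs => by
        dsimp only
        rw [← Real.rpow_mul_natCast (hpos s hs).le, ← Real.rpow_sub_one (hpos s hs).ne']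
        ring_nf
      rw [cfc_congr hsq, fracPow, norm_cfc_apply_sq hA (hrpow _), one_div]
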